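/- Let E be a finite-dimensional real inner product space and W : E → ℝ twice continuously differentiable with constants 0 < γ ≤ L such that γ‖ξ‖² ≤ D²W(x)[ξ, ξ] ≤ L‖ξ‖² for all x, ξ ∈ E. Let a* be the unique global minimizer of W. Fix 0 < ρ ≤ 1/2 and 0 < σ < 1/2, and define a sequence (aⁿ) by: a⁰ ∈ E given; if the Newton direction δⁿ at aⁿ is zero set aⁿ⁺¹ = aⁿ, otherwise aⁿ⁺¹ = aⁿ + τⁿδⁿ where τⁿ is the backtracking step size. Then for all n ≥ 0: W(aⁿ) − W(a*) ≤ qⁿ (W(a⁰) − W(a*)), with contraction factor q = 1 − 4ρσ(1 − σ)γ³/L³ < 1. -/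

import Mathlib

open scoped RealInnerProductSpace

/-!
The Hessian bounds give, by Taylor's formula along segments, the two-sided quadratic model
`W x + ⟪∇W x, v⟫ + γ/2 ‖v‖² ≤ W (x + v) ≤ W x + ⟪∇W x, v⟫ + L/2 ‖v‖²`. Minimising the lower model
over `v` yields the Polyak–Łojasiewicz inequality `2γ (W x - W a*) ≤ ‖∇W x‖²`. For the Newton
direction `δ`, positivity of the Hessian gives `γ‖δ‖² ≤ -⟪∇W, δ⟫`, and Cauchy–Schwarz for the
Hessian form gives `‖∇W‖ ≤ L‖δ‖`. By the upper model every step `t ≤ 2(1-σ)γ/L` passes the Armijo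
test, so backtracking accepts `τ ≥ 2ρ(1-σ)γ/L`, and the Armijo decrease
`στ (-⟪∇W, δ⟫) ≥ στγ/L² ‖∇W‖² ≥ 4ρσ(1-σ)γ³/L³ (W - W a*)` is the claimed contraction.
-/

theorem le_add_deriv_add_half_of_deriv2_le {f f' f'' : ℝ → ℝ} {M : ℝ}
    (hf : ∀ t, HasDerivAt f (f' t) t) (hf' : ∀ t, HasDerivAt f' (f'' t) t)
    (hM : ∀ t, f'' t ≤ M) : f 1 ≤ f 0 + f' 0 + M / 2 := by
  have hg (t : ℝ) :
      HasDerivAt (fun s ↦ f s - f' 0 * s - M / 2 * s ^ 2) (f' t - f' 0 - M * t) t := by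
    refine (((hf t).sub ((hasDerivAt_id t).const_mul (f' 0))).sub
      ((hasDerivAt_pow 2 t).const_mul (M / 2))).congr_deriv ?_
    simp only [Nat.cast_ofNat]
    ring
  obtain ⟨c, ⟨hc0, -⟩, hgc⟩ := exists_hasDerivAt_eq_slope _ _ zero_lt_one
    (HasDerivAt.continuousOn fun t _ ↦ hg t) fun t _ ↦ hg t
  obtain ⟨e, -, hfe⟩ := exists_hasDerivAt_eq_slope f' f'' hc0
    (HasDerivAt.continuousOn fun t _ ↦ hf' t) fun t _ ↦ hf' t
  rw [sub_zero, div_one] at hgc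
  rw [sub_zero, eq_div_iff hc0.ne'] at hfe
  nlinarith [hM e]

theorem add_deriv_add_half_le_of_le_deriv2 {f f' f'' : ℝ → ℝ} {M : ℝ}
    (hf : ∀ t, HasDerivAt f (f' t) t) (hf' : ∀ t, HasDerivAt f' (f'' t) t)
    (hM : ∀ t, M ≤ f'' t) : f 0 + f' 0 + M / 2 ≤ f 1 := by
  have := le_add_deriv_add_half_of_deriv2_le (f := fun t ↦ -f t) (fun t ↦ (hf t).neg)
    (fun t ↦ (hf' t).neg) (M := -M) fun t ↦ neg_le_neg (hM t)
  linarith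

section Taylor

variable {E : Type*} [NormedAddCommGroup E] [NormedSpace ℝ E]

theorem DifferentiableAt.hasDerivAt_comp_add_smul {F : Type*} [NormedAddCommGroup F]
    [NormedSpace ℝ F] {f : E → F} {x v : E} {t : ℝ} (hf : DifferentiableAt ℝ f (x + t • v)) :
    HasDerivAt (fun s : ℝ ↦ f (x + s • v)) (fderiv ℝ f (x + t • v) v) t :=
  hf.hasFDerivAt.comp_hasDerivAt t <| by
    simpa using ((hasDerivAt_id t).smul_const v).const_add x

variable {W : E → ℝ}

theorem ContDiff.hasDerivAt_fderiv_comp_add_smul (hW : ContDiff ℝ 2 W) (x v : E) (t : ℝ) :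
    HasDerivAt (fun s : ℝ ↦ fderiv ℝ W (x + s • v) v)
      (fderiv ℝ (fderiv ℝ W) (x + t • v) v v) t := by
  have hW' : Differentiable ℝ (fderiv ℝ W) :=
    (hW.fderiv_right (m := 1) le_rfl).differentiable one_ne_zero
  simpa using (hW' _).hasDerivAt_comp_add_smul.clm_apply (hasDerivAt_const t v)

theorem ContDiff.le_add_fderiv_add_of_fderiv2_le (hW : ContDiff ℝ 2 W) {c : ℝ}
    (hc : ∀ x v, fderiv ℝ (fderiv ℝ W) x v v ≤ c * ‖v‖ ^ 2) (x v : E) :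
    W (x + v) ≤ W x + fderiv ℝ W x v + c / 2 * ‖v‖ ^ 2 := by
  have := le_add_deriv_add_half_of_deriv2_le
    (fun t ↦ (hW.differentiable two_ne_zero _).hasDerivAt_comp_add_smul)
    (hW.hasDerivAt_fderiv_comp_add_smul x v) fun t ↦ hc (x + t • v) v
  simp only [zero_smul, add_zero, one_smul] at this
  linarith

theorem ContDiff.add_fderiv_add_le_of_le_fderiv2 (hW : ContDiff ℝ 2 W) {c : ℝ}
    (hc : ∀ x v, c * ‖v‖ ^ 2 ≤ fderiv ℝ (fderiv ℝ W) x v v) (x v : E) :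
    W x + fderiv ℝ W x v + c / 2 * ‖v‖ ^ 2 ≤ W (x + v) := by
  have := add_deriv_add_half_le_of_le_deriv2
    (fun t ↦ (hW.differentiable two_ne_zero _).hasDerivAt_comp_add_smul)
    (hW.hasDerivAt_fderiv_comp_add_smul x v) fun t ↦ hc (x + t • v) v
  simp only [zero_smul, add_zero, one_smul] at this
  linarith

end Taylor

section NewtonDirection

variable {E : Type*} [NormedAddCommGroup E] [InnerProductSpace ℝ E]

def IsNewtonDirection (T : E →L[ℝ] E →L[ℝ] ℝ) (g d : E) : Prop :=
  ∀ v, T d v = -⟪g, v⟫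

variable {T : E →L[ℝ] E →L[ℝ] ℝ} {g d : E}

theorem IsNewtonDirection.eq_zero_of_eq_zero (h : IsNewtonDirection T g 0) : g = 0 := by
  simpa using h g

theorem IsNewtonDirection.mul_norm_sq_le_neg_inner {γ : ℝ} (h : IsNewtonDirection T g d)
    (hγ : ∀ ξ, γ * ‖ξ‖ ^ 2 ≤ T ξ ξ) : γ * ‖d‖ ^ 2 ≤ -⟪g, d⟫ :=
  h d ▸ hγ d

theorem IsNewtonDirection.norm_sq_le {L : ℝ} (h : IsNewtonDirection T g d)
    (hsymm : ∀ u w, T u w = T w u) (hpos : ∀ ξ, 0 ≤ T ξ ξ) (hL : ∀ ξ, T ξ ξ ≤ L * ‖ξ‖ ^ 2) :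
    ‖g‖ ^ 2 ≤ L ^ 2 * ‖d‖ ^ 2 := by
  have hdg : T d g = -‖g‖ ^ 2 := by rw [h g, real_inner_self_eq_norm_sq]
  have h4 : (‖g‖ ^ 2) ^ 2 ≤ L ^ 2 * ‖d‖ ^ 2 * ‖g‖ ^ 2 := calc
    (‖g‖ ^ 2) ^ 2 = T d g * T g d := by rw [← hsymm d g, hdg]; ring
    _ ≤ T d d * T g g :=
      LinearMap.BilinForm.apply_mul_apply_le_of_forall_zero_le T.toLinearMap₁₂ hpos d g
    _ ≤ (L * ‖d‖ ^ 2) * (L * ‖g‖ ^ 2) :=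
      mul_le_mul (hL d) (hL g) (hpos g) ((hpos d).trans (hL d))
    _ = L ^ 2 * ‖d‖ ^ 2 * ‖g‖ ^ 2 := by ring
  rcases (sq_nonneg ‖g‖).eq_or_lt with hg | hg
  · rw [← hg]; positivity
  · nlinarith

end NewtonDirection

/-- If `τ = ρ^(k+1)` were below `ρ b`, then the rejected step `ρ^k` would lie in `(0, b]`. -/
theorem mul_le_of_isGreatest_pow {P : ℝ → Prop} {ρ b τ : ℝ} (hρ0 : 0 < ρ) (hρ1 : ρ < 1)
    (hρb : ρ * b ≤ 1) (hP : ∀ t, 0 < t → t ≤ b → P t)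
    (hτ : IsGreatest {t | ∃ k : ℕ, t = ρ ^ k ∧ P t} τ) : ρ * b ≤ τ := by
  obtain ⟨⟨k, rfl, -⟩, hmax⟩ := hτ
  rcases k with _ | j
  · simpa using hρb
  by_contra! hlt
  have hj : ρ ^ j ≤ b := le_of_mul_le_mul_left (by rw [← pow_succ']; exact hlt.le) hρ0
  have := hmax ⟨j, rfl, hP _ (pow_pos hρ0 j) hj⟩
  rw [pow_succ] at this
  nlinarith [pow_pos hρ0 j]

theorem newton_rate_nonneg {ρ σ γ L : ℝ} (hρ0 : 0 ≤ ρ) (hρ1 : ρ ≤ 1) (hγ : 0 ≤ γ)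
    (hγL : γ ≤ L) : 0 ≤ 1 - 4 * ρ * σ * (1 - σ) * γ ^ 3 / L ^ 3 := by
  have hγL3 : γ ^ 3 / L ^ 3 ≤ 1 :=
    div_le_one_of_le₀ (pow_le_pow_left₀ hγ hγL 3) (pow_nonneg (hγ.trans hγL) 3)
  have hγL3' : 0 ≤ γ ^ 3 / L ^ 3 := div_nonneg (pow_nonneg hγ 3) (pow_nonneg (hγ.trans hγL) 3)
  have hργL : ρ * (γ ^ 3 / L ^ 3) ≤ 1 := mul_le_one₀ hρ1 hγL3' hγL3
  have hσ : 4 * σ * (1 - σ) ≤ 1 := by nlinarith [sq_nonneg (2 * σ - 1)]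
  have : 4 * ρ * σ * (1 - σ) * γ ^ 3 / L ^ 3 = 4 * σ * (1 - σ) * (ρ * (γ ^ 3 / L ^ 3)) := by
    ring
  nlinarith [mul_nonneg (sub_nonneg.2 hσ) (mul_nonneg hρ0 hγL3')]

section Descent

variable {E : Type*} [NormedAddCommGroup E] [InnerProductSpace ℝ E] {W : E → ℝ} {x g d : E}

/-- Polyak–Łojasiewicz inequality. -/
theorem two_mul_sub_le_norm_sq_of_forall_le {γ : ℝ} (hγ : 0 < γ)
    (hlow : ∀ v, W x + ⟪g, v⟫ + γ / 2 * ‖v‖ ^ 2 ≤ W (x + v)) (y : E) :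
    2 * γ * (W x - W y) ≤ ‖g‖ ^ 2 := by
  have h := hlow (y - x)
  rw [add_sub_cancel] at h
  have hcs := neg_le_of_abs_le (abs_real_inner_le_norm g (y - x))
  nlinarith [sq_nonneg (‖g‖ - γ * ‖y - x‖)]

theorem armijo_condition_of_mul_le {γ L σ t : ℝ}
    (hup : ∀ v, W (x + v) ≤ W x + ⟪g, v⟫ + L / 2 * ‖v‖ ^ 2) (hd : γ * ‖d‖ ^ 2 ≤ -⟪g, d⟫)
    (hσ : σ < 1) (ht0 : 0 ≤ t) (ht : t * L ≤ 2 * (1 - σ) * γ) :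
    W (x + t • d) ≤ W x + σ * t * ⟪g, d⟫ := by
  have h := hup (t • d)
  rw [inner_smul_right, norm_smul, Real.norm_of_nonneg ht0] at h
  nlinarith [mul_le_mul_of_nonneg_left hd (mul_nonneg (sub_nonneg.2 hσ.le) ht0),
    mul_le_mul_of_nonneg_right ht (mul_nonneg ht0 (sq_nonneg ‖d‖))]

theorem backtracking_newton_step_sub_le {γ L ρ σ τ : ℝ} {x' : E}
    (hγ : 0 < γ) (hγL : γ ≤ L) (hρ0 : 0 < ρ) (hρ1 : ρ ≤ 1 / 2) (hσ0 : 0 ≤ σ) (hσ1 : σ < 1)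
    (hlow : ∀ v, W x + ⟪g, v⟫ + γ / 2 * ‖v‖ ^ 2 ≤ W (x + v))
    (hup : ∀ v, W (x + v) ≤ W x + ⟪g, v⟫ + L / 2 * ‖v‖ ^ 2)
    (hdγ : γ * ‖d‖ ^ 2 ≤ -⟪g, d⟫) (hdL : ‖g‖ ^ 2 ≤ L ^ 2 * ‖d‖ ^ 2)
    (hτ : IsGreatest {t | ∃ k : ℕ, t = ρ ^ k ∧ W (x + t • d) ≤ W x + σ * t * ⟪g, d⟫} τ)
    (hx' : x' = x + τ • d) (y : E) :
    W x' - W y ≤ (1 - 4 * ρ * σ * (1 - σ) * γ ^ 3 / L ^ 3) * (W x - W y) := by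
  have hL : 0 < L := hγ.trans_le hγL
  set b := 2 * (1 - σ) * γ / L
  have hρb : ρ * b ≤ 1 := by
    rw [← mul_div_assoc, div_le_one hL]
    have : 2 * ρ * (1 - σ) ≤ 1 := by nlinarith
    nlinarith [mul_le_mul_of_nonneg_right this hγ.le]
  have hτb : ρ * b ≤ τ := mul_le_of_isGreatest_pow hρ0 (by linarith) hρb
    (fun t ht0 htb ↦ armijo_condition_of_mul_le hup hdγ hσ1 ht0.le ((le_div_iff₀ hL).1 htb)) hτ
  have hdesc : W x' ≤ W x + σ * τ * ⟪g, d⟫ := by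
    obtain ⟨⟨-, -, h⟩, -⟩ := hτ
    rwa [hx']
  have hgd : γ / L ^ 2 * ‖g‖ ^ 2 ≤ -⟪g, d⟫ := by
    calc γ / L ^ 2 * ‖g‖ ^ 2 ≤ γ / L ^ 2 * (L ^ 2 * ‖d‖ ^ 2) := by gcongr
      _ = γ * ‖d‖ ^ 2 := by field_simp
      _ ≤ -⟪g, d⟫ := hdγ
  have hρb0 : 0 ≤ ρ * b := mul_nonneg hρ0.le (div_nonneg (by nlinarith) hL.le)
  have hc : 0 ≤ σ * (ρ * b) * (γ / L ^ 2) := by positivity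
  calc W x' - W y ≤ W x - W y - σ * τ * (γ / L ^ 2 * ‖g‖ ^ 2) := by
        nlinarith [mul_le_mul_of_nonneg_left hgd (mul_nonneg hσ0 (hρb0.trans hτb))]
    _ ≤ W x - W y - σ * (ρ * b) * (γ / L ^ 2) * ‖g‖ ^ 2 := by
        rw [← mul_assoc]; gcongr
    _ ≤ W x - W y - σ * (ρ * b) * (γ / L ^ 2) * (2 * γ * (W x - W y)) := by
        gcongr; exact two_mul_sub_le_norm_sq_of_forall_le hγ hlow y
    _ = (1 - 4 * ρ * σ * (1 - σ) * γ ^ 3 / L ^ 3) * (W x - W y) := by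
        simp only [b]; field_simp; ring

end Descent

theorem stmt_11_general {E : Type*} [NormedAddCommGroup E] [InnerProductSpace ℝ E]
    [FiniteDimensional ℝ E]
    (W : E → ℝ) (γ L : ℝ) (hγ : 0 < γ) (hγL : γ ≤ L)
    (hW : ContDiff ℝ 2 W)
    (hlow : ∀ x ξ : E, γ * ‖ξ‖ ^ 2 ≤ iteratedFDeriv ℝ 2 W x ![ξ, ξ])
    (hup : ∀ x ξ : E, iteratedFDeriv ℝ 2 W x ![ξ, ξ] ≤ L * ‖ξ‖ ^ 2)
    (astar : E)
    (ρ σ : ℝ) (hρ0 : 0 < ρ) (hρ1 : ρ ≤ 1 / 2) (hσ0 : 0 < σ) (hσ1 : σ < 1 / 2)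
    (a : ℕ → E) (δ : ℕ → E) (τ : ℕ → ℝ)
    (hδ : ∀ n, ∀ v : E, iteratedFDeriv ℝ 2 W (a n) ![δ n, v] = -⟪gradient W (a n), v⟫)
    (hstep0 : ∀ n, δ n = 0 → a (n + 1) = a n)
    (hstep : ∀ n, δ n ≠ 0 →
      IsGreatest {t : ℝ | ∃ k : ℕ, t = ρ ^ k ∧
        W (a n + t • δ n) ≤ W (a n) + σ * t * ⟪gradient W (a n), δ n⟫} (τ n) ∧
      a (n + 1) = a n + τ n • δ n) :
    1 - 4 * ρ * σ * (1 - σ) * γ ^ 3 / L ^ 3 < 1 ∧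
    ∀ n : ℕ, W (a n) - W astar ≤
      (1 - 4 * ρ * σ * (1 - σ) * γ ^ 3 / L ^ 3) ^ n * (W (a 0) - W astar) := by
  simp only [iteratedFDeriv_two_apply, Matrix.cons_val_zero, Matrix.cons_val_one] at hlow hup hδ
  have hL : 0 < L := hγ.trans_le hγL
  have hrate : 0 < 4 * ρ * σ * (1 - σ) * γ ^ 3 / L ^ 3 := by
    have : 0 < 1 - σ := by linarith
    positivity
  have hpos x ξ : 0 ≤ fderiv ℝ (fderiv ℝ W) x ξ ξ :=
    (by positivity : 0 ≤ γ * ‖ξ‖ ^ 2).trans (hlow x ξ)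
  have hnewton n : IsNewtonDirection (fderiv ℝ (fderiv ℝ W) (a n)) (gradient W (a n)) (δ n) :=
    hδ n
  have hsymm x : IsSymmSndFDerivAt ℝ W x := hW.contDiffAt.isSymmSndFDerivAt (by simp)
  have hlower x v : W x + ⟪gradient W x, v⟫ + γ / 2 * ‖v‖ ^ 2 ≤ W (x + v) := by
    rw [inner_gradient_left]; exact hW.add_fderiv_add_le_of_le_fderiv2 hlow x v
  have hupper x v : W (x + v) ≤ W x + ⟪gradient W x, v⟫ + L / 2 * ‖v‖ ^ 2 := by
    rw [inner_gradient_left]; exact hW.le_add_fderiv_add_of_fderiv2_le hup x v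
  have hcontract n : W (a (n + 1)) - W astar ≤
      (1 - 4 * ρ * σ * (1 - σ) * γ ^ 3 / L ^ 3) * (W (a n) - W astar) := by
    rcases eq_or_ne (δ n) 0 with h0 | h0
    · have hg : gradient W (a n) = 0 := (h0 ▸ hnewton n).eq_zero_of_eq_zero
      have := two_mul_sub_le_norm_sq_of_forall_le hγ (hlower (a n)) astar
      rw [hg, norm_zero] at this
      have hX : W (a n) - W astar ≤ 0 := by nlinarith
      rw [hstep0 n h0]
      nlinarith [mul_nonneg hrate.le (neg_nonneg.2 hX)]
    · obtain ⟨hτ, hnext⟩ := hstep n h0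
      exact backtracking_newton_step_sub_le hγ hγL hρ0 hρ1 hσ0.le (by linarith)
        (hlower (a n)) (hupper (a n)) ((hnewton n).mul_norm_sq_le_neg_inner (hlow (a n)))
        ((hnewton n).norm_sq_le (hsymm (a n)) (hpos (a n)) (hup (a n))) hτ hnext astar
  refine ⟨?_, fun n ↦ le_geom (u := fun n ↦ W (a n) - W astar)
    (newton_rate_nonneg hρ0.le (hρ1.trans (by norm_num)) hγ.le hγL) n fun k _ ↦ hcontract k⟩
  linarith

/-- Global linear decay of the energy along the damped Newton iteration with Armijo
backtracking: `W(aⁿ) - W(a*) ≤ qⁿ (W(a⁰) - W(a*))` with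
`q = 1 - 4ρσ(1-σ)γ³/L³ < 1`. -/
theorem stmt_11 {E : Type*} [NormedAddCommGroup E] [InnerProductSpace ℝ E]
    [FiniteDimensional ℝ E]
    (W : E → ℝ) (γ L : ℝ) (hγ : 0 < γ) (hγL : γ ≤ L)
    (hW : ContDiff ℝ 2 W)
    (hlow : ∀ x ξ : E, γ * ‖ξ‖ ^ 2 ≤ iteratedFDeriv ℝ 2 W x ![ξ, ξ])
    (hup : ∀ x ξ : E, iteratedFDeriv ℝ 2 W x ![ξ, ξ] ≤ L * ‖ξ‖ ^ 2)
    (astar : E) (hmin : ∀ x : E, W astar ≤ W x)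
    (ρ σ : ℝ) (hρ0 : 0 < ρ) (hρ1 : ρ ≤ 1 / 2) (hσ0 : 0 < σ) (hσ1 : σ < 1 / 2)
    (a : ℕ → E) (δ : ℕ → E) (τ : ℕ → ℝ)
    (hδ : ∀ n, ∀ v : E, iteratedFDeriv ℝ 2 W (a n) ![δ n, v] = -⟪gradient W (a n), v⟫)
    (hstep0 : ∀ n, δ n = 0 → a (n + 1) = a n)
    (hstep : ∀ n, δ n ≠ 0 →
      IsGreatest {t : ℝ | ∃ k : ℕ, t = ρ ^ k ∧
        W (a n + t • δ n) ≤ W (a n) + σ * t * ⟪gradient W (a n), δ n⟫} (τ n) ∧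
      a (n + 1) = a n + τ n • δ n) :
    1 - 4 * ρ * σ * (1 - σ) * γ ^ 3 / L ^ 3 < 1 ∧
    ∀ n : ℕ, W (a n) - W astar ≤
      (1 - 4 * ρ * σ * (1 - σ) * γ ^ 3 / L ^ 3) ^ n * (W (a 0) - W astar) :=
  stmt_11_general W γ L hγ hγL hW hlow hup astar ρ σ hρ0 hρ1 hσ0 hσ1 a δ τ hδ hstep0 hstep
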